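/- (Proposition 2(ii).) Let Λ be a jointly continuous map assigning to each triple (Σ,Ω,R), with Σ and Ω n×n real symmetric positive semidefinite matrices and R an arbitrary n×n real matrix, an n×n real matrix, which is split-invariant, rotation-invariant, strongly cross-stable, and such that for every triple (Σ,Ω,R) with Ω positive definite and every linear subspace V one has ε² Λ(Σ^q_ε, Ω^q_ε, R^q_ε) → 0 as ε → 0⁺. Then Λ is strongly fragmentation invariant: for every triple (Σ,Ω,R) with Ω positive definite and every nonzero linear subspace V with V ⊆ ker Σ and V ⊆ ker(Rᵀ), one has Π_V Λ(Σ,Ω,R) = 0, Λ(Σ,Ω,R) Π_V = 0, and Λ(Σ,Ω,R) = Λ(Π̄_V Σ Π̄_V, Π̄_V Ω Π̄_V, Π̄_V R Π̄_V). -/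

import Mathlib

/-!
Split and rotation invariance make `Λ` equivariant under congruence by any positive definite
matrix (diagonalize it orthogonally). If `V ⊆ ker Σ ∩ ker Rᵀ`, congruence by `Π̄_V + ε Π_V` fixes
`Σ` and `R`, so the regularized model is `(Π̄_V + ε⁻¹ Π_V) Λ(Σ,Ω,R) (Π̄_V + ε⁻¹ Π_V)`. Its mixed
blocks are `ε⁻¹` times those of `Λ(Σ,Ω,R)`, its `Π_V`-block is `ε⁻²` times, and its
`Π̄_V`-block does not depend on `ε`. Hence weak cross-stability and the regularity condition
kill every block of `Λ(Σ,Ω,R)` touching `V`, and strong cross-stability identifies the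
remaining block with that of `Λ(Π̄ΣΠ̄, Π̄ΩΠ̄, Π̄RΠ̄)`. The latter is itself supported on `V^⊥`,
being invariant under congruence by `Π̄_V + 2 Π_V`.
-/

open Matrix
open scoped Classical

/-- `sqrtm A` is the unique symmetric positive semidefinite square root of a
symmetric positive semidefinite real matrix `A` (junk value `0` otherwise). -/
noncomputable def sqrtm {n : ℕ} (A : Matrix (Fin n) (Fin n) ℝ) : Matrix (Fin n) (Fin n) ℝ :=
  if h : A.PosSemidef then
    (h.1.eigenvectorUnitary : Matrix (Fin n) (Fin n) ℝ) *
      diagonal ((RCLike.ofReal : ℝ → ℝ) ∘ Real.sqrt ∘ h.1.eigenvalues) *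
      (star h.1.eigenvectorUnitary : Matrix (Fin n) (Fin n) ℝ)
  else 0

/-- The Kyle cross-impact matrix `Λ_kyle(Σ,Ω) = (√Ω)⁻¹ √(√Ω Σ √Ω) (√Ω)⁻¹`. -/
noncomputable def kyle {n : ℕ} (S W : Matrix (Fin n) (Fin n) ℝ) : Matrix (Fin n) (Fin n) ℝ :=
  (sqrtm W)⁻¹ * sqrtm (sqrtm W * S * sqrtm W) * (sqrtm W)⁻¹

/-- The matrix of the orthogonal projection of `ℝⁿ` (with the standard inner product)
onto the linear subspace `V`. -/
noncomputable def projMat {n : ℕ} (V : Submodule ℝ (EuclideanSpace ℝ (Fin n))) :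
    Matrix (Fin n) (Fin n) ℝ :=
  LinearMap.toMatrix' ((EuclideanSpace.equiv (Fin n) ℝ).toLinearMap ∘ₗ V.subtype ∘ₗ
    (V.orthogonalProjectionOnto).toLinearMap ∘ₗ ((EuclideanSpace.equiv (Fin n) ℝ).symm.toLinearMap))

/-- The regularizing matrix `Π̄_V + ε Π_V`. -/
noncomputable def reg {n : ℕ} (V : Submodule ℝ (EuclideanSpace ℝ (Fin n))) (ε : ℝ) :
    Matrix (Fin n) (Fin n) ℝ :=
  (1 - projMat V) + ε • projMat V

attribute [local instance] Matrix.normedAddCommGroup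
attribute [local instance] Matrix.normedSpace

open Filter Topology

lemma eq_one_sub_mul_mul_one_sub {A : Type*} [Ring A] {p m : A} (hpp : p * m * p = 0)
    (hpq : p * m * (1 - p) = 0) (hqp : (1 - p) * m * p = 0) : m = (1 - p) * m * (1 - p) := by
  have hm : m = p * m * p + p * m * (1 - p) + (1 - p) * m * p + (1 - p) * m * (1 - p) := by
    noncomm_ring
  rwa [hpp, hpq, hqp, zero_add, zero_add, zero_add] at hm

lemma mul_conj_mul_of_eq_smul {A : Type*} [Ring A] [Algebra ℝ A] {T X Y M : A} {a b : ℝ}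
    (hX : X * T = a • X) (hY : T * Y = b • Y) :
    X * (T * M * T) * Y = (a * b) • (X * M * Y) := by
  calc X * (T * M * T) * Y = X * T * M * (T * Y) := by simp only [mul_assoc]
    _ = (a * b) • (X * M * Y) := by
      rw [hX, hY, smul_mul_assoc, smul_mul_assoc, mul_smul_comm, smul_smul]

lemma eq_zero_of_eq_smul_self {E : Type*} [AddCommGroup E] [Module ℝ E] {a : ℝ} {x : E}
    (ha : a ≠ 1) (h : x = a • x) : x = 0 := by
  have hx : (a - 1) • x = 0 := by rw [sub_smul, one_smul, ← h, sub_self]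
  exact (smul_eq_zero.mp hx).resolve_left (sub_ne_zero.mpr ha)

lemma eq_zero_of_eventually_norm_inv_smul_le {E : Type*} [NormedAddCommGroup E] [NormedSpace ℝ E]
    {x : E} (C : ℝ) (h : ∀ᶠ ε in 𝓝[>] (0 : ℝ), ‖ε⁻¹ • x‖ ≤ C) : x = 0 := by
  have hle : ∀ᶠ ε in 𝓝[>] (0 : ℝ), ‖x‖ ≤ C * ε := by
    filter_upwards [h, self_mem_nhdsWithin] with ε hε (hpos : 0 < ε)
    rwa [norm_smul, norm_inv, Real.norm_of_nonneg hpos.le, inv_mul_le_iff₀ hpos, mul_comm] at hε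
  have hlim : Tendsto (fun ε : ℝ => C * ε) (𝓝[>] 0) (𝓝 0) := by
    simpa using ((continuous_const_mul C).tendsto 0).mono_left nhdsWithin_le_nhds
  exact norm_le_zero_iff.mp (ge_of_tendsto hlim hle)

section CrossImpact

variable {ι : Type*} [Fintype ι] [DecidableEq ι]

def IsSplitInvariant (Λ : Matrix ι ι ℝ → Matrix ι ι ℝ → Matrix ι ι ℝ → Matrix ι ι ℝ) : Prop :=
  ∀ S W R : Matrix ι ι ℝ, S.PosSemidef → W.PosSemidef → ∀ d : ι → ℝ, (∀ i, 0 < d i) →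
    Λ ((diagonal d)⁻¹ * S * (diagonal d)⁻¹) (diagonal d * W * diagonal d)
      ((diagonal d)⁻¹ * R * diagonal d) = (diagonal d)⁻¹ * Λ S W R * (diagonal d)⁻¹

def IsRotationInvariant (Λ : Matrix ι ι ℝ → Matrix ι ι ℝ → Matrix ι ι ℝ → Matrix ι ι ℝ) : Prop :=
  ∀ S W R : Matrix ι ι ℝ, S.PosSemidef → W.PosSemidef → ∀ O : Matrix ι ι ℝ, O * Oᵀ = 1 →
    Λ (O * S * Oᵀ) (O * W * Oᵀ) (O * R * Oᵀ) = O * Λ S W R * Oᵀ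

omit [DecidableEq ι] in
lemma Matrix.PosSemidef.mul_mul_transpose_same {A : Matrix ι ι ℝ} (hA : A.PosSemidef)
    (B : Matrix ι ι ℝ) : (B * A * Bᵀ).PosSemidef := by
  simpa only [conjTranspose_eq_transpose_of_trivial] using hA.mul_mul_conjTranspose_same B

lemma Matrix.PosDef.exists_eq_mul_diagonal_mul_transpose {P : Matrix ι ι ℝ} (hP : P.PosDef) :
    ∃ (O : Matrix ι ι ℝ) (d : ι → ℝ), O * Oᵀ = 1 ∧ (∀ i, 0 < d i) ∧ P = O * diagonal d * Oᵀ := by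
  refine ⟨hP.1.eigenvectorUnitary, hP.1.eigenvalues, ?_, hP.eigenvalues_pos, ?_⟩
  · simpa [star_eq_conjTranspose] using Unitary.mul_star_self_of_mem hP.1.eigenvectorUnitary.2
  · simpa [Unitary.conjStarAlgAut_apply, star_eq_conjTranspose] using hP.1.spectral_theorem

variable {Λ : Matrix ι ι ℝ → Matrix ι ι ℝ → Matrix ι ι ℝ → Matrix ι ι ℝ}

lemma IsRotationInvariant.apply_transpose_conj (hrot : IsRotationInvariant Λ) {S W : Matrix ι ι ℝ}
    (R : Matrix ι ι ℝ) (hS : S.PosSemidef) (hW : W.PosSemidef) {O : Matrix ι ι ℝ}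
    (hO : O * Oᵀ = 1) :
    Λ (Oᵀ * S * O) (Oᵀ * W * O) (Oᵀ * R * O) = Oᵀ * Λ S W R * O := by
  simpa only [transpose_transpose] using
    hrot S W R hS hW Oᵀ (by rw [transpose_transpose]; exact mul_eq_one_comm.mp hO)

theorem IsSplitInvariant.apply_conj_posDef (hsplit : IsSplitInvariant Λ)
    (hrot : IsRotationInvariant Λ) {S W : Matrix ι ι ℝ} (R : Matrix ι ι ℝ) (hS : S.PosSemidef)
    (hW : W.PosSemidef) {P : Matrix ι ι ℝ} (hP : P.PosDef) :
    Λ (P⁻¹ * S * P⁻¹) (P * W * P) (P⁻¹ * R * P) = P⁻¹ * Λ S W R * P⁻¹ := by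
  obtain ⟨O, d, hO, hd, rfl⟩ := hP.exists_eq_mul_diagonal_mul_transpose
  have hPinv : (O * diagonal d * Oᵀ)⁻¹ = O * (diagonal d)⁻¹ * Oᵀ := by
    rw [Matrix.mul_inv_rev, Matrix.mul_inv_rev, inv_eq_left_inv hO,
      inv_eq_left_inv (mul_eq_one_comm.mp hO), Matrix.mul_assoc]
  have hS₀ : (Oᵀ * S * O).PosSemidef := by
    simpa only [transpose_transpose] using hS.mul_mul_transpose_same Oᵀ
  have hW₀ : (Oᵀ * W * O).PosSemidef := by
    simpa only [transpose_transpose] using hW.mul_mul_transpose_same Oᵀ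
  have hS₁ : ((diagonal d)⁻¹ * (Oᵀ * S * O) * (diagonal d)⁻¹).PosSemidef := by
    simpa only [transpose_nonsing_inv, diagonal_transpose]
      using hS₀.mul_mul_transpose_same (diagonal d)⁻¹
  have hW₁ : (diagonal d * (Oᵀ * W * O) * diagonal d).PosSemidef := by
    simpa only [diagonal_transpose] using hW₀.mul_mul_transpose_same (diagonal d)
  calc Λ ((O * diagonal d * Oᵀ)⁻¹ * S * (O * diagonal d * Oᵀ)⁻¹)
        (O * diagonal d * Oᵀ * W * (O * diagonal d * Oᵀ))
        ((O * diagonal d * Oᵀ)⁻¹ * R * (O * diagonal d * Oᵀ))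
      = Λ (O * ((diagonal d)⁻¹ * (Oᵀ * S * O) * (diagonal d)⁻¹) * Oᵀ)
          (O * (diagonal d * (Oᵀ * W * O) * diagonal d) * Oᵀ)
          (O * ((diagonal d)⁻¹ * (Oᵀ * R * O) * diagonal d) * Oᵀ) := by
        rw [hPinv]; simp only [Matrix.mul_assoc]
    _ = O * ((diagonal d)⁻¹ * (Oᵀ * Λ S W R * O) * (diagonal d)⁻¹) * Oᵀ := by
        rw [hrot _ _ _ hS₁ hW₁ O hO, hsplit _ _ _ hS₀ hW₀ d hd,
          hrot.apply_transpose_conj R hS hW hO]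
    _ = (O * diagonal d * Oᵀ)⁻¹ * Λ S W R * (O * diagonal d * Oᵀ)⁻¹ := by
        rw [hPinv]; simp only [Matrix.mul_assoc]

end CrossImpact

variable {n : ℕ}

section Projection

variable (V : Submodule ℝ (EuclideanSpace ℝ (Fin n)))

lemma toEuclideanLin_projMat : toEuclideanLin (projMat V) = V.starProjection.toLinearMap := by
  ext x : 1
  rw [Matrix.toLpLin_apply, projMat, ← Matrix.toLin'_apply, Matrix.toLin'_toMatrix']
  rfl

lemma projMat_mul_self : projMat V * projMat V = projMat V :=
  toEuclideanLin.injective <| by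
    rw [toLpLin_mul_same, toEuclideanLin_projMat]
    exact congrArg ContinuousLinearMap.toLinearMap V.isIdempotentElem_starProjection.eq

lemma projMat_transpose : (projMat V)ᵀ = projMat V := by
  have h : (toEuclideanLin (projMat V)).IsSymmetric := by
    rw [toEuclideanLin_projMat]; exact V.starProjection_isSymmetric
  exact (isSymmetric_toEuclideanLin_iff.mp h).eq

lemma projMat_mulVec (x : Fin n → ℝ) :
    projMat V *ᵥ x = EuclideanSpace.equiv (Fin n) ℝ (V.starProjection (WithLp.toLp 2 x)) :=
  congrArg WithLp.ofLp (LinearMap.congr_fun (toEuclideanLin_projMat V) (WithLp.toLp 2 x))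

lemma mul_projMat_eq_zero {A : Matrix (Fin n) (Fin n) ℝ}
    (hA : ∀ v ∈ V, A *ᵥ EuclideanSpace.equiv (Fin n) ℝ v = 0) : A * projMat V = 0 :=
  ext_iff_mulVec.mpr fun x => by
    rw [← mulVec_mulVec, projMat_mulVec, zero_mulVec]
    exact hA _ (V.starProjection_apply_mem _)

lemma projMat_mul_eq_zero {A : Matrix (Fin n) (Fin n) ℝ}
    (hA : ∀ v ∈ V, Aᵀ *ᵥ EuclideanSpace.equiv (Fin n) ℝ v = 0) : projMat V * A = 0 := by
  simpa [projMat_transpose] using congrArg transpose (mul_projMat_eq_zero V hA)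

lemma projMat_mul_one_sub : projMat V * (1 - projMat V) = 0 := by
  rw [Matrix.mul_sub, projMat_mul_self, mul_one, sub_self]

lemma one_sub_projMat_mul : (1 - projMat V) * projMat V = 0 := by
  rw [Matrix.sub_mul, projMat_mul_self, one_mul, sub_self]

lemma one_sub_projMat_mul_self : (1 - projMat V) * (1 - projMat V) = 1 - projMat V := by
  rw [Matrix.sub_mul, projMat_mul_one_sub, sub_zero, one_mul]

lemma one_sub_projMat_transpose : (1 - projMat V)ᵀ = 1 - projMat V := by
  rw [transpose_sub, transpose_one, projMat_transpose]

lemma projMat_mul_one_sub_projMat_conj (M : Matrix (Fin n) (Fin n) ℝ) :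
    projMat V * ((1 - projMat V) * M * (1 - projMat V)) = 0 := by
  rw [← Matrix.mul_assoc, ← Matrix.mul_assoc, projMat_mul_one_sub, Matrix.zero_mul, Matrix.zero_mul]

lemma one_sub_projMat_conj_mul_projMat (M : Matrix (Fin n) (Fin n) ℝ) :
    (1 - projMat V) * M * (1 - projMat V) * projMat V = 0 := by
  rw [Matrix.mul_assoc, one_sub_projMat_mul, Matrix.mul_zero]

end Projection

section Regularization

variable (V : Submodule ℝ (EuclideanSpace ℝ (Fin n)))

lemma reg_mul_reg (a b : ℝ) : reg V a * reg V b = reg V (a * b) := by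
  simp only [reg, Matrix.add_mul, Matrix.mul_add, Matrix.mul_smul, Matrix.smul_mul,
    one_sub_projMat_mul_self, projMat_mul_one_sub, one_sub_projMat_mul, projMat_mul_self,
    smul_zero, smul_smul, add_zero, zero_add, mul_comm b a]

lemma reg_one : reg V 1 = 1 := by
  simp [reg]

lemma reg_inv {ε : ℝ} (hε : ε ≠ 0) : (reg V ε)⁻¹ = reg V ε⁻¹ :=
  inv_eq_right_inv (by rw [reg_mul_reg, mul_inv_cancel₀ hε, reg_one])

lemma reg_transpose (ε : ℝ) : (reg V ε)ᵀ = reg V ε := by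
  simp [reg, projMat_transpose]

lemma reg_posDef {ε : ℝ} (hε : 0 < ε) : (reg V ε).PosDef := by
  have hs : √ε ≠ 0 := (Real.sqrt_pos.mpr hε).ne'
  have hinj : Function.Injective (reg V √ε).mulVec := fun x y h => by
    simpa [mulVec_mulVec, reg_mul_reg, inv_mul_cancel₀ hs, reg_one]
      using congrArg (reg V (√ε)⁻¹ *ᵥ ·) h
  -- `reg V ε = (reg V √ε)ᴴ * reg V √ε`
  simpa [conjTranspose_eq_transpose_of_trivial, reg_transpose, reg_mul_reg,
    Real.mul_self_sqrt hε.le] using PosDef.conjTranspose_mul_self _ hinj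

lemma one_sub_projMat_mul_reg (a : ℝ) : (1 - projMat V) * reg V a = 1 - projMat V := by
  rw [reg, Matrix.mul_add, one_sub_projMat_mul_self, Matrix.mul_smul, one_sub_projMat_mul,
    smul_zero, add_zero]

lemma reg_mul_one_sub_projMat (a : ℝ) : reg V a * (1 - projMat V) = 1 - projMat V := by
  rw [reg, Matrix.add_mul, one_sub_projMat_mul_self, Matrix.smul_mul, projMat_mul_one_sub,
    smul_zero, add_zero]

lemma projMat_mul_reg (a : ℝ) : projMat V * reg V a = a • projMat V := by
  rw [reg, Matrix.mul_add, projMat_mul_one_sub, Matrix.mul_smul, projMat_mul_self, zero_add]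

lemma reg_mul_projMat (a : ℝ) : reg V a * projMat V = a • projMat V := by
  rw [reg, Matrix.add_mul, one_sub_projMat_mul, Matrix.smul_mul, projMat_mul_self, zero_add]

lemma reg_mul_of_projMat_mul_eq_zero {M : Matrix (Fin n) (Fin n) ℝ} (h : projMat V * M = 0)
    (a : ℝ) : reg V a * M = M := by
  rw [reg, Matrix.add_mul, Matrix.sub_mul, one_mul, h, sub_zero, Matrix.smul_mul, h, smul_zero,
    add_zero]

lemma mul_reg_of_mul_projMat_eq_zero {M : Matrix (Fin n) (Fin n) ℝ} (h : M * projMat V = 0)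
    (a : ℝ) : M * reg V a = M := by
  rw [reg, Matrix.mul_add, Matrix.mul_sub, mul_one, h, sub_zero, Matrix.mul_smul, h, smul_zero,
    add_zero]

end Regularization

section RegularizedBlocks

variable (V : Submodule ℝ (EuclideanSpace ℝ (Fin n)))

lemma eq_one_sub_projMat_conj_of_reg_conj_eq {M : Matrix (Fin n) (Fin n) ℝ} {c : ℝ} (hc : 1 < c)
    (h : reg V c * M * reg V c = M) : M = (1 - projMat V) * M * (1 - projMat V) := by
  have hQ : (1 - projMat V) * reg V c = (1 : ℝ) • (1 - projMat V) := by
    rw [one_smul, one_sub_projMat_mul_reg]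
  have hQ' : reg V c * (1 - projMat V) = (1 : ℝ) • (1 - projMat V) := by
    rw [one_smul, reg_mul_one_sub_projMat]
  have hpp := mul_conj_mul_of_eq_smul (M := M) (projMat_mul_reg V c) (reg_mul_projMat V c)
  have hpq := mul_conj_mul_of_eq_smul (M := M) (projMat_mul_reg V c) hQ'
  have hqp := mul_conj_mul_of_eq_smul (M := M) hQ (reg_mul_projMat V c)
  rw [h] at hpp hpq hqp
  refine eq_one_sub_mul_mul_one_sub (eq_zero_of_eq_smul_self ?_ hpp)
    (eq_zero_of_eq_smul_self ?_ hpq) (eq_zero_of_eq_smul_self ?_ hqp) <;> nlinarith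

lemma smul_reg_inv {ε : ℝ} (hε : ε ≠ 0) : ε • reg V ε⁻¹ = ε • (1 - projMat V) + projMat V := by
  rw [reg, smul_add, smul_smul, mul_inv_cancel₀ hε, one_smul]

variable {V} {f : ℝ → Matrix (Fin n) (Fin n) ℝ} {M : Matrix (Fin n) (Fin n) ℝ}

lemma offDiagonal_blocks_eq_zero_of_bounded
    (hf : ∀ᶠ ε in 𝓝[>] 0, f ε = reg V ε⁻¹ * M * reg V ε⁻¹)
    (hb : ∃ C, ∀ᶠ ε in 𝓝[>] 0, ‖(1 - projMat V) * f ε * projMat V‖ ≤ C ∧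
      ‖projMat V * f ε * (1 - projMat V)‖ ≤ C) :
    (1 - projMat V) * M * projMat V = 0 ∧ projMat V * M * (1 - projMat V) = 0 := by
  obtain ⟨C, hC⟩ := hb
  have hQ (ε : ℝ) : (1 - projMat V) * reg V ε⁻¹ = (1 : ℝ) • (1 - projMat V) := by
    rw [one_smul, one_sub_projMat_mul_reg]
  have hQ' (ε : ℝ) : reg V ε⁻¹ * (1 - projMat V) = (1 : ℝ) • (1 - projMat V) := by
    rw [one_smul, reg_mul_one_sub_projMat]
  constructor <;> refine eq_zero_of_eventually_norm_inv_smul_le C ?_ <;>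
    filter_upwards [hf, hC] with ε hfε hCε
  · simpa [hfε, mul_conj_mul_of_eq_smul (hQ ε) (reg_mul_projMat V ε⁻¹)] using hCε.1
  · simpa [hfε, mul_conj_mul_of_eq_smul (projMat_mul_reg V ε⁻¹) (hQ' ε)] using hCε.2

lemma projMat_block_eq_zero_of_tendsto (hf : ∀ᶠ ε in 𝓝[>] 0, f ε = reg V ε⁻¹ * M * reg V ε⁻¹)
    (h : Tendsto (fun ε => ε ^ 2 • f ε) (𝓝[>] 0) (𝓝 0)) : projMat V * M * projMat V = 0 := by
  set g : ℝ → Matrix (Fin n) (Fin n) ℝ := fun ε =>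
    (ε • (1 - projMat V) + projMat V) * M * (ε • (1 - projMat V) + projMat V)
  have hg : Tendsto g (𝓝[>] 0) (𝓝 (projMat V * M * projMat V)) := by
    have hcont : Continuous g := by fun_prop
    simpa [g] using (hcont.tendsto 0).mono_left nhdsWithin_le_nhds
  have hfg : (fun ε => ε ^ 2 • f ε) =ᶠ[𝓝[>] 0] g := by
    filter_upwards [hf, self_mem_nhdsWithin] with ε hfε (hpos : 0 < ε)
    simp only [g, hfε, ← smul_reg_inv V hpos.ne', Matrix.smul_mul, Matrix.mul_smul, smul_smul, sq]
  exact tendsto_nhds_unique (hg.congr' hfg.symm) h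

lemma one_sub_projMat_block_eq_of_tendsto {L : Matrix (Fin n) (Fin n) ℝ}
    (hf : ∀ᶠ ε in 𝓝[>] 0, f ε = reg V ε⁻¹ * M * reg V ε⁻¹)
    (h : Tendsto (fun ε => (1 - projMat V) * f ε * (1 - projMat V)) (𝓝[>] 0) (𝓝 L)) :
    (1 - projMat V) * M * (1 - projMat V) = L := by
  refine tendsto_nhds_unique (tendsto_const_nhds.congr' ?_) h
  filter_upwards [hf] with ε hfε
  calc (1 - projMat V) * M * (1 - projMat V)
      = ((1 - projMat V) * reg V ε⁻¹) * M * (reg V ε⁻¹ * (1 - projMat V)) := by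
        rw [one_sub_projMat_mul_reg, reg_mul_one_sub_projMat]
    _ = (1 - projMat V) * f ε * (1 - projMat V) := by rw [hfε]; simp only [Matrix.mul_assoc]

end RegularizedBlocks

section Fragmentation

variable (V : Submodule ℝ (EuclideanSpace ℝ (Fin n)))
  {Λ : Matrix (Fin n) (Fin n) ℝ → Matrix (Fin n) (Fin n) ℝ → Matrix (Fin n) (Fin n) ℝ →
    Matrix (Fin n) (Fin n) ℝ}

theorem IsSplitInvariant.apply_regularized_eq (hsplit : IsSplitInvariant Λ)
    (hrot : IsRotationInvariant Λ) {S W : Matrix (Fin n) (Fin n) ℝ} (R : Matrix (Fin n) (Fin n) ℝ)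
    (hS : S.PosSemidef) (hW : W.PosSemidef) (hSP : S * projMat V = 0) (hPS : projMat V * S = 0)
    (hPR : projMat V * R = 0) {ε : ℝ} (hε : 0 < ε) :
    Λ S (reg V ε * W * reg V ε) (R * reg V ε) = reg V ε⁻¹ * Λ S W R * reg V ε⁻¹ := by
  have h := hsplit.apply_conj_posDef hrot R hS hW (reg_posDef V hε)
  rwa [reg_inv V hε.ne', reg_mul_of_projMat_mul_eq_zero V hPS,
    mul_reg_of_mul_projMat_eq_zero V hSP, reg_mul_of_projMat_mul_eq_zero V hPR] at h

theorem IsSplitInvariant.apply_one_sub_projMat_conj (hsplit : IsSplitInvariant Λ)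
    (hrot : IsRotationInvariant Λ) {S W : Matrix (Fin n) (Fin n) ℝ} (R : Matrix (Fin n) (Fin n) ℝ)
    (hS : S.PosSemidef) (hW : W.PosSemidef) :
    Λ ((1 - projMat V) * S * (1 - projMat V)) ((1 - projMat V) * W * (1 - projMat V))
        ((1 - projMat V) * R * (1 - projMat V)) =
      (1 - projMat V) * Λ ((1 - projMat V) * S * (1 - projMat V))
        ((1 - projMat V) * W * (1 - projMat V)) ((1 - projMat V) * R * (1 - projMat V)) *
        (1 - projMat V) := by
  have hQS := hS.mul_mul_transpose_same (1 - projMat V)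
  have hQW := hW.mul_mul_transpose_same (1 - projMat V)
  rw [one_sub_projMat_transpose] at hQS hQW
  have h := hsplit.apply_regularized_eq V hrot _ hQS hQW (one_sub_projMat_conj_mul_projMat V S)
    (projMat_mul_one_sub_projMat_conj V S) (projMat_mul_one_sub_projMat_conj V R)
    (ε := 2⁻¹) (by norm_num)
  rw [reg_mul_of_projMat_mul_eq_zero V (projMat_mul_one_sub_projMat_conj V W),
    mul_reg_of_mul_projMat_eq_zero V (one_sub_projMat_conj_mul_projMat V W),
    mul_reg_of_mul_projMat_eq_zero V (one_sub_projMat_conj_mul_projMat V R), inv_inv] at h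
  exact eq_one_sub_projMat_conj_of_reg_conj_eq V one_lt_two h.symm

end Fragmentation

theorem strongCrossStability_implies_strongFragmentation_general {n : ℕ}
    (Λ : Matrix (Fin n) (Fin n) ℝ → Matrix (Fin n) (Fin n) ℝ → Matrix (Fin n) (Fin n) ℝ → Matrix (Fin n) (Fin n) ℝ)
    (hsplit : ∀ S W R : Matrix (Fin n) (Fin n) ℝ, S.PosSemidef → W.PosSemidef → ∀ d : Fin n → ℝ, (∀ i, 0 < d i) →
      Λ ((diagonal d)⁻¹ * S * (diagonal d)⁻¹) (diagonal d * W * diagonal d)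
        ((diagonal d)⁻¹ * R * diagonal d)
        = (diagonal d)⁻¹ * Λ S W R * (diagonal d)⁻¹)
    (hrot : ∀ S W R : Matrix (Fin n) (Fin n) ℝ, S.PosSemidef → W.PosSemidef → ∀ O : Matrix (Fin n) (Fin n) ℝ, O * Oᵀ = 1 →
      Λ (O * S * Oᵀ) (O * W * Oᵀ) (O * R * Oᵀ) = O * Λ S W R * Oᵀ)
    (hwcs : ∀ S W R : Matrix (Fin n) (Fin n) ℝ, S.PosSemidef → W.PosSemidef →
      ∀ V : Submodule ℝ (EuclideanSpace ℝ (Fin n)), ∃ C : ℝ,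
        ∀ᶠ ε in nhdsWithin (0 : ℝ) (Set.Ioi 0),
          ‖(1 - projMat V) * Λ S (reg V ε * W * reg V ε) (R * reg V ε) * projMat V‖ ≤ C ∧
          ‖projMat V * Λ S (reg V ε * W * reg V ε) (R * reg V ε) * (1 - projMat V)‖ ≤ C)
    (hscs : ∀ S W R : Matrix (Fin n) (Fin n) ℝ, S.PosSemidef → W.PosDef →
      ∀ V : Submodule ℝ (EuclideanSpace ℝ (Fin n)),
        Filter.Tendsto
          (fun ε : ℝ =>
            (1 - projMat V) * Λ S (reg V ε * W * reg V ε) (R * reg V ε) * (1 - projMat V))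
          (nhdsWithin 0 (Set.Ioi 0))
          (nhds ((1 - projMat V) * Λ ((1 - projMat V) * S * (1 - projMat V))
            ((1 - projMat V) * W * (1 - projMat V)) ((1 - projMat V) * R * (1 - projMat V))
            * (1 - projMat V))))
    (hreg : ∀ S W R : Matrix (Fin n) (Fin n) ℝ, S.PosSemidef → W.PosDef →
      ∀ V : Submodule ℝ (EuclideanSpace ℝ (Fin n)),
        Filter.Tendsto (fun ε : ℝ => (ε ^ 2) • Λ S (reg V ε * W * reg V ε) (R * reg V ε))
          (nhdsWithin 0 (Set.Ioi 0)) (nhds 0)) :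
    ∀ S W R : Matrix (Fin n) (Fin n) ℝ, S.PosSemidef → W.PosDef →
      ∀ V : Submodule ℝ (EuclideanSpace ℝ (Fin n)), V ≠ ⊥ →
      (∀ v ∈ V, S.mulVec (EuclideanSpace.equiv (Fin n) ℝ v) = 0) →
      (∀ v ∈ V, Rᵀ.mulVec (EuclideanSpace.equiv (Fin n) ℝ v) = 0) →
      projMat V * Λ S W R = 0 ∧ Λ S W R * projMat V = 0 ∧
      Λ S W R = Λ ((1 - projMat V) * S * (1 - projMat V))
        ((1 - projMat V) * W * (1 - projMat V)) ((1 - projMat V) * R * (1 - projMat V)) := by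
  intro S W R hS hW V _ hSV hRV
  have hSt : Sᵀ = S := by simpa [conjTranspose_eq_transpose_of_trivial] using hS.isHermitian.eq
  have hΛε : ∀ᶠ ε in 𝓝[>] 0, Λ S (reg V ε * W * reg V ε) (R * reg V ε) =
      reg V ε⁻¹ * Λ S W R * reg V ε⁻¹ :=
    eventually_mem_nhdsWithin.mono fun ε hε =>
      IsSplitInvariant.apply_regularized_eq V hsplit hrot R hS hW.posSemidef
        (mul_projMat_eq_zero V hSV) (projMat_mul_eq_zero V (hSt ▸ hSV))
        (projMat_mul_eq_zero V hRV) hε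
  obtain ⟨hQP, hPQ⟩ := offDiagonal_blocks_eq_zero_of_bounded hΛε (hwcs S W R hS hW.posSemidef V)
  have hPP := projMat_block_eq_zero_of_tendsto hΛε (hreg S W R hS hW V)
  have hQQ := one_sub_projMat_block_eq_of_tendsto hΛε (hscs S W R hS hW V)
  have hΛ : Λ S W R = (1 - projMat V) * Λ S W R * (1 - projMat V) :=
    eq_one_sub_mul_mul_one_sub hPP hPQ hQP
  have hΛ₁ := IsSplitInvariant.apply_one_sub_projMat_conj V hsplit hrot R hS hW.posSemidef
  refine ⟨?_, ?_, by rw [hΛ, hQQ, ← hΛ₁]⟩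
  · rw [hΛ]; exact projMat_mul_one_sub_projMat_conj V _
  · rw [hΛ]; exact one_sub_projMat_conj_mul_projMat V _

/-- Proposition 2(ii): a jointly continuous, split- and rotation-invariant,
strongly cross-stable cross-impact model satisfying the regularity condition is
strongly fragmentation invariant. -/
theorem strongCrossStability_implies_strongFragmentation {n : ℕ}
    (Λ : Matrix (Fin n) (Fin n) ℝ → Matrix (Fin n) (Fin n) ℝ → Matrix (Fin n) (Fin n) ℝ → Matrix (Fin n) (Fin n) ℝ)
    (hcont : ContinuousOn
      (fun p : Matrix (Fin n) (Fin n) ℝ × Matrix (Fin n) (Fin n) ℝ × Matrix (Fin n) (Fin n) ℝ => Λ p.1 p.2.1 p.2.2)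
      {p : Matrix (Fin n) (Fin n) ℝ × Matrix (Fin n) (Fin n) ℝ × Matrix (Fin n) (Fin n) ℝ | p.1.PosSemidef ∧ p.2.1.PosSemidef})
    (hsplit : ∀ S W R : Matrix (Fin n) (Fin n) ℝ, S.PosSemidef → W.PosSemidef → ∀ d : Fin n → ℝ, (∀ i, 0 < d i) →
      Λ ((diagonal d)⁻¹ * S * (diagonal d)⁻¹) (diagonal d * W * diagonal d)
        ((diagonal d)⁻¹ * R * diagonal d)
        = (diagonal d)⁻¹ * Λ S W R * (diagonal d)⁻¹)
    (hrot : ∀ S W R : Matrix (Fin n) (Fin n) ℝ, S.PosSemidef → W.PosSemidef → ∀ O : Matrix (Fin n) (Fin n) ℝ, O * Oᵀ = 1 →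
      Λ (O * S * Oᵀ) (O * W * Oᵀ) (O * R * Oᵀ) = O * Λ S W R * Oᵀ)
    (hwcs : ∀ S W R : Matrix (Fin n) (Fin n) ℝ, S.PosSemidef → W.PosSemidef →
      ∀ V : Submodule ℝ (EuclideanSpace ℝ (Fin n)), ∃ C : ℝ,
        ∀ᶠ ε in nhdsWithin (0 : ℝ) (Set.Ioi 0),
          ‖(1 - projMat V) * Λ S (reg V ε * W * reg V ε) (R * reg V ε) * projMat V‖ ≤ C ∧
          ‖projMat V * Λ S (reg V ε * W * reg V ε) (R * reg V ε) * (1 - projMat V)‖ ≤ C)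
    (hscs : ∀ S W R : Matrix (Fin n) (Fin n) ℝ, S.PosSemidef → W.PosDef →
      ∀ V : Submodule ℝ (EuclideanSpace ℝ (Fin n)),
        Filter.Tendsto
          (fun ε : ℝ =>
            (1 - projMat V) * Λ S (reg V ε * W * reg V ε) (R * reg V ε) * (1 - projMat V))
          (nhdsWithin 0 (Set.Ioi 0))
          (nhds ((1 - projMat V) * Λ ((1 - projMat V) * S * (1 - projMat V))
            ((1 - projMat V) * W * (1 - projMat V)) ((1 - projMat V) * R * (1 - projMat V))
            * (1 - projMat V))))
    (hreg : ∀ S W R : Matrix (Fin n) (Fin n) ℝ, S.PosSemidef → W.PosDef →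
      ∀ V : Submodule ℝ (EuclideanSpace ℝ (Fin n)),
        Filter.Tendsto (fun ε : ℝ => (ε ^ 2) • Λ S (reg V ε * W * reg V ε) (R * reg V ε))
          (nhdsWithin 0 (Set.Ioi 0)) (nhds 0)) :
    ∀ S W R : Matrix (Fin n) (Fin n) ℝ, S.PosSemidef → W.PosDef →
      ∀ V : Submodule ℝ (EuclideanSpace ℝ (Fin n)), V ≠ ⊥ →
      (∀ v ∈ V, S.mulVec (EuclideanSpace.equiv (Fin n) ℝ v) = 0) →
      (∀ v ∈ V, Rᵀ.mulVec (EuclideanSpace.equiv (Fin n) ℝ v) = 0) →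
      projMat V * Λ S W R = 0 ∧ Λ S W R * projMat V = 0 ∧
      Λ S W R = Λ ((1 - projMat V) * S * (1 - projMat V))
        ((1 - projMat V) * W * (1 - projMat V)) ((1 - projMat V) * R * (1 - projMat V)) :=
  strongCrossStability_implies_strongFragmentation_general Λ hsplit hrot hwcs hscs hreg
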